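/- arXiv:0708.0747 — 3 statements merged into one kernel-verified Lean document; each statement's English description precedes it below -/
import Mathlib

section
/- If S(c,r) is a Delaunay sphere of a lattice L ⊂ ℝ^n, P is the Delaunay polytope with vertex set S(c,r) ∩ L, and (v_0,…,v_n) are vertices of P, then for any b ∈ ℤ^{n+1} with ∑ b_i = 1, setting d(i,j) = ‖v_i − v_j‖², one has ∑_{0≤i<j≤n} b_i b_j d(i,j) = r² − ‖∑_i b_i v_i − c‖². In particular, since ∑_i b_i v_i ∈ L and every lattice point is at distance ≥ r from c, the hypermetric inequality ∑_{i<j} b_i b_j d(i,j) ≤ 0 holds. -/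
/-!
Put `w i = v i - c`, so `‖w i‖ = r`. Expanding `‖w i - w j‖² = ‖w i‖² + ‖w j‖² - 2⟪w i, w j⟫`
and using `∑ b = 1`, the full double sum `∑ᵢ ∑ⱼ b i b j ‖v i - v j‖²` equals
`2 r² - 2 ‖∑ b i w i‖²`; it is twice the sum over `i < j`, and `∑ b i w i = ∑ b i v i - c`.
The affine combination `∑ b i v i` has integer coefficients, so it lies in `L` and is at
distance at least `r` from `c`.
-/

open scoped RealInnerProductSpace
open Finset

theorem sum_sum_eq_sum_add_two_nsmul_sum_sum_ite_lt {ι M : Type*} [Fintype ι] [LinearOrder ι]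
    [AddCommMonoid M] {f : ι → ι → M} (hf : ∀ i j, f i j = f j i) :
    ∑ i, ∑ j, f i j = ∑ i, f i i + 2 • ∑ i, ∑ j, if i < j then f i j else 0 := by
  have hsplit : ∀ i j, f i j = (if i = j then f i j else 0) + (if i < j then f i j else 0)
      + (if j < i then f i j else 0) := by
    intro i j
    rcases lt_trichotomy i j with h | rfl | h
    · simp [h, h.ne, h.not_gt]
    · simp
    · simp [h, h.ne', h.not_gt]
  have hflip : (∑ i, ∑ j, if j < i then f i j else 0) = ∑ i, ∑ j, if i < j then f i j else 0 := by
    rw [sum_comm]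
    simp only [hf]
  conv_lhs => enter [2, i, 2, j]; rw [hsplit i j]
  simp only [sum_add_distrib, sum_ite_eq, mem_univ, if_true, hflip, two_nsmul, add_assoc]

theorem sum_sum_mul_mul_norm_sub_sq {ι E : Type*} [Fintype ι] [NormedAddCommGroup E]
    [InnerProductSpace ℝ E] (b : ι → ℝ) (w : ι → E) :
    ∑ i, ∑ j, b i * b j * ‖w i - w j‖ ^ 2
      = 2 * (∑ i, b i) * (∑ i, b i * ‖w i‖ ^ 2) - 2 * ‖∑ i, b i • w i‖ ^ 2 := by
  have hnorm : ‖∑ i, b i • w i‖ ^ 2 = ∑ i, ∑ j, b i * b j * ⟪w i, w j⟫ := by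
    rw [← real_inner_self_eq_norm_sq, sum_inner]
    simp_rw [inner_sum, real_inner_smul_left, real_inner_smul_right, mul_assoc]
  have hterm : ∀ i j, b i * b j * ‖w i - w j‖ ^ 2
      = b j * (b i * ‖w i‖ ^ 2) + b i * (b j * ‖w j‖ ^ 2) - 2 * (b i * b j * ⟪w i, w j⟫) := by
    intro i j
    rw [norm_sub_sq_real]
    ring
  simp only [hterm, hnorm, sum_add_distrib, sum_sub_distrib, ← mul_sum, ← sum_mul]
  ring

theorem sum_sum_ite_lt_mul_mul_norm_sub_sq_of_norm_sub_eq {ι E : Type*} [Fintype ι]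
    [LinearOrder ι] [NormedAddCommGroup E] [InnerProductSpace ℝ E] {b : ι → ℝ}
    (hb : ∑ i, b i = 1) {v : ι → E} {c : E} {r : ℝ} (hv : ∀ i, ‖v i - c‖ = r) :
    ∑ i, ∑ j, (if i < j then b i * b j * ‖v i - v j‖ ^ 2 else 0)
      = r ^ 2 - ‖∑ i, b i • (v i - c)‖ ^ 2 := by
  have hfull := sum_sum_mul_mul_norm_sub_sq b (fun i => v i - c)
  rw [sum_sum_eq_sum_add_two_nsmul_sum_sum_ite_lt
    (fun i j => by rw [norm_sub_rev, mul_comm (b i)])] at hfull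
  simp only [sub_sub_sub_cancel_right, hv, hb, ← sum_mul, sub_self, norm_zero, two_nsmul,
    zero_pow two_ne_zero, mul_zero, sum_const_zero, zero_add] at hfull
  linarith

theorem sum_zsmul_sub_eq_sum_smul_sub {ι E : Type*} [Fintype ι] [AddCommGroup E] [Module ℝ E]
    {b : ι → ℤ} (hb : ∑ i, b i = 1) (v : ι → E) (c : E) :
    (∑ i, b i • v i) - c = ∑ i, (b i : ℝ) • (v i - c) := by
  simp only [smul_sub, sum_sub_distrib, Int.cast_smul_eq_zsmul, ← sum_smul, hb, one_smul]

/-- For vertices of a Delaunay polytope on a Delaunay sphere `S(c,r)` of a lattice `L`,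
the distances `d i j = ‖v i - v j‖²` satisfy
`∑_{i<j} b i b j d i j = r² - ‖∑ b i v i - c‖² ≤ 0` for every `b ∈ ℤ^{n+1}` with `∑ b = 1`. -/
theorem delaunay_hypermetric (n : ℕ) (L : AddSubgroup (EuclideanSpace ℝ (Fin n)))
    (c : EuclideanSpace ℝ (Fin n)) (r : ℝ) (hr : 0 ≤ r)
    (hL : ∀ v ∈ L, r ≤ ‖v - c‖)
    (v : Fin (n + 1) → EuclideanSpace ℝ (Fin n))
    (hvL : ∀ i, v i ∈ L) (hvS : ∀ i, ‖v i - c‖ = r)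
    (b : Fin (n + 1) → ℤ) (hb : (∑ i, b i) = 1) :
    (∑ i, ∑ j, if i < j then (b i : ℝ) * (b j : ℝ) * ‖v i - v j‖ ^ 2 else 0)
      = r ^ 2 - ‖(∑ i, (b i : ℤ) • v i) - c‖ ^ 2 ∧
    (∑ i, ∑ j, if i < j then (b i : ℝ) * (b j : ℝ) * ‖v i - v j‖ ^ 2 else 0) ≤ 0 := by
  have hbℝ : ∑ i, (b i : ℝ) = 1 := by exact_mod_cast hb
  have hidentity := sum_sum_ite_lt_mul_mul_norm_sub_sq_of_norm_sub_eq hbℝ hvS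
  rw [← sum_zsmul_sub_eq_sum_smul_sub hb] at hidentity
  refine ⟨hidentity, hidentity ▸ sub_nonpos.2 (pow_le_pow_left₀ hr ?_ 2)⟩
  exact hL _ (sum_mem fun i _ => zsmul_mem (hvL i) (b i))
end

section
/- Two complete orders O and O' on N = {1,…,n} determine the same family of interval sets — i.e. {S : S is an interval of O} = {S : S is an interval of O'} — if and only if O' = O or O' is the reverse of O, provided n ≥ 3. -/
/-!
If `σ` and `τ` have the same intervals, every two-element `σ`-interval `{σ a, σ b}` (with `a`, `b`
adjacent positions) is a `τ`-interval, so `τ⁻¹ * σ` maps adjacent positions to adjacent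
positions: it is an automorphism of the path graph on `Fin n`. Such a map cannot turn back,
since it would then send two positions at distance two to the same point; hence it is strictly
monotone or strictly antitone, i.e. the identity or the reversal. Conversely, reversing all
positions sends the interval `[j, k)` to `[n - k, n - j)`.
-/

/-- `S` is an interval of the order `σ` of `{1,…,n}`: the set of elements in consecutive
positions `j+1, …, k` of the order. -/
def IsInterval (n : ℕ) (σ : Equiv.Perm (Fin n)) (S : Finset (Fin n)) : Prop :=
  ∃ j k : ℕ, S = Finset.univ.filter
    (fun m => j ≤ ((σ.symm m : Fin n) : ℕ) ∧ ((σ.symm m : Fin n) : ℕ) < k)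

open Equiv SimpleGraph

lemma apply_lt_apply_of_covBy_of_apply_lt {α β : Type*} [LinearOrder α] [LinearOrder β]
    {f : α → β} (hf : Function.Injective f)
    (hadj : ∀ a b, (hasse α).Adj a b → (hasse β).Adj (f a) (f b))
    {a b c : α} (hab : a ⋖ b) (hbc : b ⋖ c) (h : f a < f b) : f b < f c := by
  have hfab : f a ⋖ f b :=
    (hasse_adj.1 (hadj a b (hasse_adj.2 (Or.inl hab)))).resolve_right fun h' => h.not_gt h'.lt
  rcases hasse_adj.1 (hadj b c (hasse_adj.2 (Or.inl hbc))) with h' | h'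
  · exact h'.lt
  · exact absurd (hf (hfab.unique_left h')) (hab.lt.trans hbc.lt).ne

namespace Fin

lemma rev_covBy_rev {n : ℕ} {a b : Fin n} (h : a ⋖ b) : b.rev ⋖ a.rev := by
  simp only [Fin.covBy_iff, Nat.covBy_iff_add_one_eq, Fin.val_rev] at h ⊢
  omega

lemma pathGraph_adj_rev {n : ℕ} {a b : Fin n} (h : (pathGraph n).Adj a b) :
    (pathGraph n).Adj a.rev b.rev :=
  hasse_adj.2 ((hasse_adj.1 h).symm.imp rev_covBy_rev rev_covBy_rev)

lemma strictMono_of_pathGraph_adj {m : ℕ} {g : Fin (m + 2) → Fin (m + 2)}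
    (hg : Function.Injective g)
    (hadj : ∀ a b, (pathGraph (m + 2)).Adj a b → (pathGraph (m + 2)).Adj (g a) (g b))
    (h01 : g 0 < g 1) : StrictMono g := by
  have zero_covBy_one : (0 : Fin (m + 2)) ⋖ 1 := by simp [Fin.covBy_iff]
  refine (strictMono_iff_forall_covBy g).2 fun a => ?_
  induction a using Fin.induction with
  | zero => intro b hb; rwa [hb.unique_right zero_covBy_one]
  | succ i ih =>
    have hi : i.castSucc ⋖ i.succ := by simp [Fin.covBy_iff]
    exact fun b hb => apply_lt_apply_of_covBy_of_apply_lt hg hadj hi hb (ih _ hi)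

end Fin

lemma Equiv.Perm.eq_one_or_eq_revPerm_of_pathGraph_adj {n : ℕ} {g : Perm (Fin n)}
    (hadj : ∀ a b, (pathGraph n).Adj a b → (pathGraph n).Adj (g a) (g b)) :
    g = 1 ∨ g = Fin.revPerm := by
  obtain _ | _ | m := n
  · exact Or.inl (Subsingleton.elim _ _)
  · exact Or.inl (Equiv.ext fun _ => Subsingleton.elim (α := Fin 1) _ _)
  rcases lt_or_gt_of_ne (g.injective.ne (zero_ne_one (α := Fin (m + 2)))) with h01 | h10
  · exact Or.inl (Equiv.ext fun _ =>
      (Fin.strictMono_of_pathGraph_adj g.injective hadj h01).apply_eq)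
  · refine Or.inr (Equiv.ext fun a => ?_)
    have hmono : StrictMono fun a => (g a).rev :=
      Fin.strictMono_of_pathGraph_adj (Fin.rev_injective.comp g.injective)
        (fun a b h => Fin.pathGraph_adj_rev (hadj a b h)) (Fin.rev_lt_rev.2 h10)
    simpa [Fin.rev_eq_iff] using hmono.apply_eq (x := a)

namespace IsInterval

variable {n : ℕ}

lemma mul_revPerm {σ : Perm (Fin n)} {S : Finset (Fin n)} (hS : IsInterval n σ S) :
    IsInterval n (σ * Fin.revPerm) S := by
  obtain ⟨j, k, rfl⟩ := hS
  refine ⟨n - min k n, n - min j n, Finset.ext fun m => ?_⟩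
  have := (σ.symm m).isLt
  simp only [Finset.mem_filter, Finset.mem_univ, true_and, Perm.mul_def, symm_trans_apply,
    Fin.revPerm_symm, Fin.revPerm_apply, Fin.val_rev]
  omega

lemma mul_revPerm_iff {σ : Perm (Fin n)} {S : Finset (Fin n)} :
    IsInterval n (σ * Fin.revPerm) S ↔ IsInterval n σ S :=
  have revPerm_mul_revPerm : Fin.revPerm * Fin.revPerm = (1 : Perm (Fin n)) :=
    Equiv.ext Fin.rev_rev
  ⟨fun h => by simpa [mul_assoc, revPerm_mul_revPerm] using h.mul_revPerm, mul_revPerm⟩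

lemma pair_of_pathGraph_adj (σ : Perm (Fin n)) {a b : Fin n} (hab : (pathGraph n).Adj a b) :
    IsInterval n σ {σ a, σ b} := by
  refine ⟨min (a : ℕ) b, min (a : ℕ) b + 2, Finset.ext fun m => ?_⟩
  obtain ⟨p, rfl⟩ := σ.surjective m
  rw [pathGraph_adj] at hab
  simp only [Finset.mem_insert, Finset.mem_singleton, Finset.mem_filter, Finset.mem_univ,
    true_and, σ.injective.eq_iff, symm_apply_apply, Fin.ext_iff]
  omega

lemma pathGraph_adj_of_pair {τ : Perm (Fin n)} {x y : Fin n} (hS : IsInterval n τ {τ x, τ y})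
    (hxy : x ≠ y) : (pathGraph n).Adj x y := by
  obtain ⟨j, k, hS⟩ := hS
  have mem_iff (c : Fin n) : c = x ∨ c = y ↔ j ≤ c ∧ c < k := by
    simpa [τ.injective.eq_iff] using Finset.ext_iff.1 hS (τ c)
  have hx := (mem_iff x).1 (Or.inl rfl)
  have hy := (mem_iff y).1 (Or.inr rfl)
  rw [pathGraph_adj]
  by_contra hfar
  have hc : min (x : ℕ) y + 1 < n := by omega
  have := (mem_iff ⟨min (x : ℕ) y + 1, hc⟩).2 (by dsimp only; omega)
  simp only [Fin.ext_iff] at this hxy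
  omega

end IsInterval

lemma pathGraph_adj_inv_mul_apply {n : ℕ} {σ τ : Perm (Fin n)}
    (h : ∀ S, IsInterval n σ S → IsInterval n τ S) {a b : Fin n} (hab : (pathGraph n).Adj a b) :
    (pathGraph n).Adj ((τ⁻¹ * σ) a) ((τ⁻¹ * σ) b) := by
  refine IsInterval.pathGraph_adj_of_pair (τ := τ) ?_ ((τ⁻¹ * σ).injective.ne hab.ne)
  simpa using h _ (IsInterval.pair_of_pathGraph_adj σ hab)

theorem interval_families_eq_iff_reverse_general (n : ℕ) (σ τ : Equiv.Perm (Fin n)) :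
    (∀ S : Finset (Fin n), IsInterval n σ S ↔ IsInterval n τ S) ↔
      ((∀ m, τ m = σ m) ∨ (∀ m, τ m = σ m.rev)) := by
  constructor
  · intro h
    rcases Perm.eq_one_or_eq_revPerm_of_pathGraph_adj
      fun _ _ => pathGraph_adj_inv_mul_apply fun S => (h S).1 with hg | hg
    · obtain rfl := inv_mul_eq_one.1 hg
      exact Or.inl fun _ => rfl
    · obtain rfl := inv_mul_eq_iff_eq_mul.1 hg
      exact Or.inr fun m => by simp
  · rintro (h | h)
    · obtain rfl : τ = σ := Equiv.ext h
      exact fun _ => Iff.rfl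
    · obtain rfl : τ = σ * Fin.revPerm := Equiv.ext h
      exact fun _ => IsInterval.mul_revPerm_iff.symm

/-- For `n ≥ 3`, two complete orders on `{1,…,n}` have the same family of intervals if and
only if they are equal or reverse to each other. -/
theorem interval_families_eq_iff_reverse (n : ℕ) (hn : 3 ≤ n) (σ τ : Equiv.Perm (Fin n)) :
    (∀ S : Finset (Fin n), IsInterval n σ S ↔ IsInterval n τ S) ↔
      ((∀ m, τ m = σ m) ∨ (∀ m, τ m = σ m.rev)) :=
  interval_families_eq_iff_reverse_general n σ τ
end

section
/- For n ≥ 4, any two distinct interval families differ in at least two sets: if O and O' are complete orders on {1,…,n} with S(O) ≠ S(O'), then |S(O) Δ S(O')| ≥ 4 (equivalently, they cannot share exactly n(n+1)/2 − 1 common intervals). Hence no two distinct principal L-domains in HYP_{n+1} share a facet. -/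
/-!
The intervals of a linear order are closed under intersection, under the union of two
overlapping intervals, and under `S \ T` whenever `T ⊄ S`. Suppose `S` is the only
`σ`-interval that is not a `τ`-interval. Singletons are intervals of every order; if
`|S| ≥ 3`, then `S` is the union of two overlapping shorter `σ`-intervals; and if `|S| = 2`,
then for `n ≥ 4` it is the intersection, or the difference, of two `σ`-intervals of length
three or two. Either way `S` is a `τ`-interval after all. So one family is contained in the
other, and they are equal because `τ σ⁻¹` maps the first bijectively onto the second.
-/

open Finset

variable {n : ℕ}

def intervalFamily (n : ℕ) (σ : Equiv.Perm (Fin n)) : Set (Finset (Fin n)) :=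
  {S | S.Nonempty ∧ IsInterval n σ S}

/-- Elements in positions `j, …, k - 1` of `σ` (position `p` holds `σ p`). -/
def orderIco (σ : Equiv.Perm (Fin n)) (j k : ℕ) : Finset (Fin n) :=
  univ.filter fun m => j ≤ ((σ.symm m : Fin n) : ℕ) ∧ ((σ.symm m : Fin n) : ℕ) < k

section orderIco

variable {σ : Equiv.Perm (Fin n)} {S : Finset (Fin n)} {j k : ℕ}

theorem isInterval_iff : IsInterval n σ S ↔ ∃ j k, S = orderIco σ j k := Iff.rfl

theorem isInterval_orderIco (σ : Equiv.Perm (Fin n)) (j k : ℕ) :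
    IsInterval n σ (orderIco σ j k) :=
  ⟨j, k, rfl⟩

theorem mem_orderIco {m : Fin n} :
    m ∈ orderIco σ j k ↔ j ≤ (σ.symm m : ℕ) ∧ (σ.symm m : ℕ) < k := by
  simp [orderIco]

theorem apply_mem_orderIco {t : ℕ} (ht : t < n) :
    σ ⟨t, ht⟩ ∈ orderIco σ j k ↔ j ≤ t ∧ t < k := by
  rw [mem_orderIco, Equiv.symm_apply_apply]

theorem orderIco_nonempty (σ : Equiv.Perm (Fin n)) (hj : j < n) (hjk : j < k) :
    (orderIco σ j k).Nonempty :=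
  ⟨σ ⟨j, hj⟩, (apply_mem_orderIco hj).2 ⟨le_rfl, hjk⟩⟩

theorem orderIco_add_one (hj : j < n) : orderIco σ j (j + 1) = {σ ⟨j, hj⟩} := by
  ext m
  simp only [mem_orderIco, mem_singleton, ← Equiv.symm_apply_eq, Fin.ext_iff]
  omega

theorem orderIco_inj {a b : ℕ} (hab : a < b) (hb : b ≤ n) (hjk : j < k) (hk : k ≤ n) :
    orderIco σ a b = orderIco σ j k ↔ a = j ∧ b = k := by
  refine ⟨fun h => ?_, by rintro ⟨rfl, rfl⟩; rfl⟩
  have ha := congrArg (σ ⟨a, by omega⟩ ∈ ·) h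
  have hj := congrArg (σ ⟨j, by omega⟩ ∈ ·) h
  have hb := congrArg (σ ⟨b - 1, by omega⟩ ∈ ·) h
  have hk := congrArg (σ ⟨k - 1, by omega⟩ ∈ ·) h
  simp only [apply_mem_orderIco, eq_iff_iff] at ha hj hb hk
  omega

theorem not_orderIco_subset {j' k' t : ℕ} (ht : t < n) (hin : j' ≤ t ∧ t < k')
    (hout : ¬(j ≤ t ∧ t < k)) : ¬orderIco σ j' k' ⊆ orderIco σ j k :=
  fun hsub => hout ((apply_mem_orderIco ht).1 (hsub ((apply_mem_orderIco ht).2 hin)))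

theorem map_orderIco (ρ σ : Equiv.Perm (Fin n)) (j k : ℕ) :
    (orderIco σ j k).map ρ.toEmbedding = orderIco (ρ * σ) j k := by
  ext m
  simp [mem_map_equiv, mem_orderIco, Equiv.Perm.mul_def]

end orderIco

namespace IsInterval

variable {σ : Equiv.Perm (Fin n)} {S T : Finset (Fin n)}

theorem singleton (σ : Equiv.Perm (Fin n)) (m : Fin n) : IsInterval n σ {m} := by
  refine isInterval_iff.2 ⟨σ.symm m, σ.symm m + 1, ?_⟩
  ext p
  rw [mem_singleton, mem_orderIco, ← σ.symm.injective.eq_iff, Fin.ext_iff]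
  omega

theorem exists_orderIco (hS : IsInterval n σ S) (hne : S.Nonempty) :
    ∃ j k, j < k ∧ k ≤ n ∧ S = orderIco σ j k := by
  obtain ⟨j, k, rfl⟩ := isInterval_iff.1 hS
  obtain ⟨m, hm⟩ := hne
  rw [mem_orderIco] at hm
  refine ⟨j, min k n, by omega, min_le_right _ _, ?_⟩
  ext p
  simp only [mem_orderIco]
  omega

theorem inter (hS : IsInterval n σ S) (hT : IsInterval n σ T) : IsInterval n σ (S ∩ T) := by
  obtain ⟨j, k, rfl⟩ := isInterval_iff.1 hS
  obtain ⟨j', k', rfl⟩ := isInterval_iff.1 hT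
  refine isInterval_iff.2 ⟨max j j', min k k', ?_⟩
  ext m
  simp only [mem_inter, mem_orderIco]
  omega

theorem union (hS : IsInterval n σ S) (hT : IsInterval n σ T) (hST : (S ∩ T).Nonempty) :
    IsInterval n σ (S ∪ T) := by
  obtain ⟨j, k, rfl⟩ := isInterval_iff.1 hS
  obtain ⟨j', k', rfl⟩ := isInterval_iff.1 hT
  obtain ⟨m, hm⟩ := hST
  simp only [mem_inter, mem_orderIco] at hm
  refine isInterval_iff.2 ⟨min j j', max k k', ?_⟩
  ext p
  simp only [mem_union, mem_orderIco]
  omega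

theorem sdiff (hS : IsInterval n σ S) (hT : IsInterval n σ T) (hTS : ¬T ⊆ S) :
    IsInterval n σ (S \ T) := by
  obtain ⟨j, k, rfl⟩ := isInterval_iff.1 hS
  obtain ⟨j', k', rfl⟩ := isInterval_iff.1 hT
  obtain ⟨m, hmT, hmS⟩ := not_subset.1 hTS
  rw [mem_orderIco] at hmT hmS
  rcases lt_or_ge (σ.symm m : ℕ) j with hlt | hge
  · refine isInterval_iff.2 ⟨max j k', k, ?_⟩
    ext p
    simp only [mem_sdiff, mem_orderIco]
    omega
  · refine isInterval_iff.2 ⟨j, min k j', ?_⟩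
    ext p
    simp only [mem_sdiff, mem_orderIco]
    omega

end IsInterval

section unique_exception

variable {σ τ : Equiv.Perm (Fin n)} {j k : ℕ}

theorem isInterval_orderIco_of_three_le (hjk : j + 3 ≤ k) (hk : k ≤ n)
    (hgood : ∀ a b, a < b → b ≤ n → (a ≠ j ∨ b ≠ k) → IsInterval n τ (orderIco σ a b)) :
    IsInterval n τ (orderIco σ j k) := by
  have hunion : orderIco σ j k = orderIco σ j (k - 1) ∪ orderIco σ (j + 1) k := by
    ext m
    simp only [mem_union, mem_orderIco]
    omega
  have hmeet : (orderIco σ j (k - 1) ∩ orderIco σ (j + 1) k).Nonempty :=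
    ⟨σ ⟨j + 1, by omega⟩, mem_inter.2
      ⟨(apply_mem_orderIco _).2 ⟨by omega, by omega⟩, (apply_mem_orderIco _).2 ⟨le_rfl, by omega⟩⟩⟩
  rw [hunion]
  exact (hgood _ _ (by omega) (by omega) (by omega)).union
    (hgood _ _ (by omega) (by omega) (by omega)) hmeet

theorem isInterval_orderIco_pair (hn : 4 ≤ n) (hj : j + 2 ≤ n)
    (hgood : ∀ a b, a < b → b ≤ n → (a ≠ j ∨ b ≠ j + 2) → IsInterval n τ (orderIco σ a b)) :
    IsInterval n τ (orderIco σ j (j + 2)) := by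
  obtain rfl | hend | ⟨hj₁, hj₃⟩ : j = 0 ∨ j + 2 = n ∨ (1 ≤ j ∧ j + 3 ≤ n) := by omega
  · have h : orderIco σ 0 2 = orderIco σ 0 3 \ orderIco σ 2 4 := by
      ext m
      simp only [mem_sdiff, mem_orderIco]
      omega
    rw [h]
    exact (hgood 0 3 (by omega) (by omega) (by omega)).sdiff
      (hgood 2 4 (by omega) (by omega) (by omega)) (not_orderIco_subset (t := 3) (by omega)
        (by omega) (by omega))
  · have h : orderIco σ j (j + 2) = orderIco σ (j - 1) (j + 2) \ orderIco σ (j - 2) j := by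
      ext m
      simp only [mem_sdiff, mem_orderIco]
      omega
    rw [h]
    exact (hgood _ _ (by omega) (by omega) (by omega)).sdiff
      (hgood _ _ (by omega) (by omega) (by omega)) (not_orderIco_subset (t := j - 2) (by omega)
        (by omega) (by omega))
  · have h : orderIco σ j (j + 2) = orderIco σ (j - 1) (j + 2) ∩ orderIco σ j (j + 3) := by
      ext m
      simp only [mem_inter, mem_orderIco]
      omega
    rw [h]
    exact (hgood _ _ (by omega) (by omega) (by omega)).inter
      (hgood _ _ (by omega) (by omega) (by omega))

theorem isInterval_orderIco_of_forall_ne (hn : 4 ≤ n) (hjk : j < k) (hk : k ≤ n)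
    (hgood : ∀ a b, a < b → b ≤ n → (a ≠ j ∨ b ≠ k) → IsInterval n τ (orderIco σ a b)) :
    IsInterval n τ (orderIco σ j k) := by
  obtain rfl | rfl | h₃ : k = j + 1 ∨ k = j + 2 ∨ j + 3 ≤ k := by omega
  · rw [orderIco_add_one (by omega)]
    exact IsInterval.singleton τ _
  · exact isInterval_orderIco_pair hn hk hgood
  · exact isInterval_orderIco_of_three_le h₃ hk hgood

theorem intervalFamily_subset_of_subsingleton (hn : 4 ≤ n)
    (h : (intervalFamily n σ \ intervalFamily n τ).Subsingleton) :
    intervalFamily n σ ⊆ intervalFamily n τ := by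
  rintro S ⟨hne, hS⟩
  refine ⟨hne, ?_⟩
  obtain ⟨j, k, hjk, hk, rfl⟩ := hS.exists_orderIco hne
  by_contra hSτ
  refine hSτ (isInterval_orderIco_of_forall_ne hn hjk hk fun a b hab hb hne' => ?_)
  by_contra hbad
  have heq := h ⟨⟨orderIco_nonempty σ (by omega) hab, isInterval_orderIco σ a b⟩,
    fun hτ => hbad hτ.2⟩ ⟨⟨hne, hS⟩, fun hτ => hSτ hτ.2⟩
  obtain ⟨rfl, rfl⟩ := (orderIco_inj hab hb hjk hk).1 heq
  simp at hne'

end unique_exception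

theorem intervalFamily_mul (ρ σ : Equiv.Perm (Fin n)) :
    intervalFamily n (ρ * σ) = (fun S => S.map ρ.toEmbedding) '' intervalFamily n σ := by
  ext S
  constructor
  · rintro ⟨hne, hS⟩
    obtain ⟨j, k, rfl⟩ := isInterval_iff.1 hS
    rw [← map_orderIco] at hne ⊢
    exact ⟨orderIco σ j k, ⟨map_nonempty.1 hne, isInterval_orderIco σ j k⟩, rfl⟩
  · rintro ⟨T, ⟨hne, hT⟩, rfl⟩
    obtain ⟨j, k, rfl⟩ := isInterval_iff.1 hT
    refine ⟨map_nonempty.2 hne, ?_⟩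
    simp only [map_orderIco]
    exact isInterval_orderIco _ j k

theorem intervalFamily_eq_of_subset {σ τ : Equiv.Perm (Fin n)}
    (h : intervalFamily n σ ⊆ intervalFamily n τ) : intervalFamily n σ = intervalFamily n τ := by
  have hτ : intervalFamily n τ = (fun S => S.map (τ * σ⁻¹).toEmbedding) '' intervalFamily n σ := by
    rw [← intervalFamily_mul, inv_mul_cancel_right]
  refine Set.eq_of_subset_of_ncard_le h ?_
  rw [hτ, Set.ncard_image_of_injective _ (map_injective _)]

theorem two_le_ncard_intervalFamily_sdiff (hn : 4 ≤ n) {σ τ : Equiv.Perm (Fin n)}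
    (h : intervalFamily n σ ≠ intervalFamily n τ) :
    2 ≤ (intervalFamily n σ \ intervalFamily n τ).ncard := by
  by_contra hlt
  have hsub : (intervalFamily n σ \ intervalFamily n τ).Subsingleton :=
    Set.ncard_le_one_iff_subsingleton.1 (by omega)
  exact h (intervalFamily_eq_of_subset (intervalFamily_subset_of_subsingleton hn hsub))

/-- For `n ≥ 4`, two distinct families of nonempty intervals differ by at least two sets on
each side; hence distinct principal `L`-domains in `HYP_{n+1}` never share a facet. -/
theorem distinct_interval_families_differ_by_two (n : ℕ) (hn : 4 ≤ n)
    (σ τ : Equiv.Perm (Fin n))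
    (h : {S : Finset (Fin n) | S.Nonempty ∧ IsInterval n σ S} ≠
         {S : Finset (Fin n) | S.Nonempty ∧ IsInterval n τ S}) :
    2 ≤ ({S : Finset (Fin n) | S.Nonempty ∧ IsInterval n σ S} \
          {S : Finset (Fin n) | S.Nonempty ∧ IsInterval n τ S}).ncard ∧
    2 ≤ ({S : Finset (Fin n) | S.Nonempty ∧ IsInterval n τ S} \
          {S : Finset (Fin n) | S.Nonempty ∧ IsInterval n σ S}).ncard :=
  ⟨two_le_ncard_intervalFamily_sdiff hn h, two_le_ncard_intervalFamily_sdiff hn (Ne.symm h)⟩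
end
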